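/- arXiv:1807.10191 — 3 statements merged into one kernel-verified Lean document; each statement's English description precedes it below -/
import Mathlib

section
/- The auxiliary function F(ω) = max_{x ∈ S}[f(x) − ω·g(x)] (S compact nonempty, f, g continuous, g > 0) satisfies: F(ω*) = 0 if and only if ω* = max_{x ∈ S} f(x)/g(x). -/
lemma aux_max {S : Type*} [TopologicalSpace S] [CompactSpace S] [Nonempty S]
    (h : S → ℝ) (hc : Continuous h) :
    ∃ x0 : S, (⨆ x : S, h x) = h x0 ∧ ∀ x, h x ≤ h x0 := by
  obtain ⟨x0, hx0⟩ := hc.exists_forall_ge (by simp [Filter.cocompact_eq_bot])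
  refine ⟨x0, ?_, hx0⟩
  apply le_antisymm
  · exact ciSup_le fun x => hx0 x
  · exact le_ciSup ⟨h x0, fun y ⟨x, hx⟩ => hx ▸ hx0 x⟩ x0

/-- `F(ω*) = 0` iff `ω*` equals the maximum of `f/g` over a nonempty compact space,
where `F(ω) = max_{x ∈ S} [f x − ω g x]`, `f, g` continuous and `g > 0`. -/
theorem stmt8 {S : Type*} [TopologicalSpace S] [CompactSpace S] [Nonempty S]
    (f g : S → ℝ) (hf : Continuous f) (hg : Continuous g)
    (hgpos : ∀ x, 0 < g x) (ωstar : ℝ) :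
    (⨆ x : S, (f x - ωstar * g x)) = 0 ↔ ωstar = ⨆ x : S, f x / g x := by
  obtain ⟨x0, hF, hFmax⟩ := aux_max (fun x => f x - ωstar * g x)
    (hf.sub (continuous_const.mul hg))
  obtain ⟨x1, hR, hRmax⟩ := aux_max (fun x => f x / g x) (hf.div hg fun x => (hgpos x).ne')
  constructor
  · intro h0
    rw [hF] at h0
    have hb : ∀ x, f x / g x ≤ ωstar := by
      intro x
      rw [div_le_iff₀ (hgpos x)]
      have := hFmax x
      rw [h0] at this
      linarith
    have h1 : f x0 / g x0 = ωstar := by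
      field_simp [(hgpos x0).ne']
      linarith
    rw [hR]
    exact le_antisymm (h1 ▸ hRmax x0) (hb x1)
  · intro hw
    rw [hF]
    have h1 : f x1 = ωstar * g x1 := by
      have : f x1 / g x1 = ωstar := by rw [hw, hR]
      field_simp [(hgpos x1).ne'] at this
      linarith
    have h2 : f x0 - ωstar * g x0 ≤ 0 := by
      have := hRmax x0
      rw [hw, hR] at *
      have : f x0 / g x0 ≤ f x1 / g x1 := hRmax x0
      rw [div_le_iff₀ (hgpos x0)] at this
      nlinarith [this, h1, (hgpos x0).le]
    have h3 : 0 ≤ f x1 - ωstar * g x1 := by linarith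
    exact le_antisymm h2 (le_trans h3 (hFmax x1))
end

section
/- Adding quantization noise reduces the achievable SIC sum-rate: for any L×L Hermitian PSD matrix S, σ² > 0, and diagonal PSD matrices Ψ₁ ⪯ Ψ₂ (entrywise on the diagonal), log det(S + Ψ₂ + σ²I) − log det(Ψ₂ + σ²I) ≤ log det(S + Ψ₁ + σ²I) − log det(Ψ₁ + σ²I). -/
/-!
Raising the `l`-th diagonal entry of `A` by `t ≥ 0` is the rank-one update `t • e_l e_lᴴ`. By the
matrix determinant lemma it adds `log (1 + t e_lᴴ (S + A)⁻¹ e_l)` to `log det (S + A)` and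
`log (1 + t e_lᴴ A⁻¹ e_l)` to `log det A`, and `(S + A)⁻¹ ≤ A⁻¹` in the Loewner order, so the gain
`log det (S + A) - log det A` cannot increase. Raising the diagonal entries one at a time from
`ψ₁ + σ²` to `ψ₂ + σ²` gives the theorem.
-/

open Matrix ComplexOrder

namespace Matrix

variable {n 𝕜 : Type*} [DecidableEq n] [RCLike 𝕜]

lemma diagonal_update_eq_add_smul_vecMulVec (d : n → ℝ) (l : n) (x : ℝ) :
    diagonal (fun i => (Function.update d l x i : 𝕜)) =
      diagonal (fun i => (d i : 𝕜)) +
        ((x - d l : ℝ) : 𝕜) • vecMulVec (Pi.single l 1) (star (Pi.single l 1)) := by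
  ext i j
  by_cases hij : i = j
  · subst hij
    by_cases hil : i = l
    · subst hil; simp [vecMulVec_apply]
    · simp [hil, vecMulVec_apply]
  · rcases eq_or_ne j l with rfl | hjl
    · simp [hij, vecMulVec_apply]
    · simp [hij, hjl, vecMulVec_apply]

variable [Fintype n]

lemma PosDef.re_det_pos {A : Matrix n n 𝕜} (hA : A.PosDef) : 0 < RCLike.re A.det :=
  (RCLike.pos_iff.mp hA.det_pos).1

lemma PosDef.posSemidef_inv_sub_inv_add {A B : Matrix n n 𝕜} (hA : A.PosDef)
    (hB : B.PosSemidef) : (A⁻¹ - (A + B)⁻¹).PosSemidef := by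
  have hM := hA.add_posSemidef hB
  have hAu : IsUnit A.det := hA.det_pos.ne'.isUnit
  have hMu : IsUnit (A + B).det := hM.det_pos.ne'.isUnit
  have hBAB : B + B * A⁻¹ * B = (A + B) * A⁻¹ * (A + B) - (A + B) := by
    simp only [Matrix.add_mul, Matrix.mul_add, mul_nonsing_inv _ hAu, Matrix.mul_assoc,
      nonsing_inv_mul _ hAu, Matrix.mul_one, Matrix.one_mul]
    abel
  -- the difference is a congruence of the positive semidefinite matrix `B + B A⁻¹ B`
  have hcongr : A⁻¹ - (A + B)⁻¹ = ((A + B)⁻¹)ᴴ * (B + Bᴴ * A⁻¹ * B) * (A + B)⁻¹ := by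
    rw [hM.isHermitian.inv.eq, hB.isHermitian.eq, hBAB]
    simp only [Matrix.mul_sub, Matrix.sub_mul, ← Matrix.mul_assoc, nonsing_inv_mul _ hMu,
      Matrix.one_mul]
    simp only [Matrix.mul_assoc, mul_nonsing_inv _ hMu, Matrix.mul_one]
  rw [hcongr]
  exact (hB.add (hA.inv.posSemidef.conjTranspose_mul_mul_same B)).conjTranspose_mul_mul_same _

lemma PosDef.re_det_add_smul_vecMulVec {A : Matrix n n 𝕜} (hA : A.PosDef) (t : ℝ) (v : n → 𝕜) :
    RCLike.re (A + (t : 𝕜) • vecMulVec v (star v)).det =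
      RCLike.re A.det * (1 + t * RCLike.re (star v ⬝ᵥ A⁻¹ *ᵥ v)) := by
  have hdet : (A + (t : 𝕜) • vecMulVec v (star v)).det =
      A.det * (1 + t * (star v ⬝ᵥ A⁻¹ *ᵥ v)) := by
    rw [vecMulVec_eq Unit, ← Matrix.smul_mul, ← replicateCol_smul,
      det_add_replicateCol_mul_replicateRow hA.det_pos.ne'.isUnit, det_unique (n := Unit),
      Matrix.mul_assoc, ← replicateCol_mulVec, add_apply, one_apply_eq,
      replicateRow_mul_replicateCol_apply, mulVec_smul, dotProduct_smul, smul_eq_mul]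
  have hdet_im : RCLike.im A.det = 0 := (RCLike.pos_iff.mp hA.det_pos).2
  have hq_im : RCLike.im (star v ⬝ᵥ A⁻¹ *ᵥ v) = 0 :=
    hA.inv.isHermitian.im_star_dotProduct_mulVec_self v
  rw [hdet, RCLike.mul_re, hdet_im]
  simp [hq_im]

noncomputable def logDetGain (S A : Matrix n n 𝕜) : ℝ :=
  Real.log (RCLike.re (S + A).det) - Real.log (RCLike.re A.det)

lemma logDetGain_add_smul_vecMulVec_le {S A : Matrix n n 𝕜} (hS : S.PosSemidef) (hA : A.PosDef)
    {t : ℝ} (ht : 0 ≤ t) (v : n → 𝕜) :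
    logDetGain S (A + (t : 𝕜) • vecMulVec v (star v)) ≤ logDetGain S A := by
  have hSA : (S + A).PosDef := add_comm A S ▸ hA.add_posSemidef hS
  set q := RCLike.re (star v ⬝ᵥ (S + A)⁻¹ *ᵥ v)
  set r := RCLike.re (star v ⬝ᵥ A⁻¹ *ᵥ v)
  have hq : 0 ≤ q := hSA.inv.posSemidef.re_dotProduct_nonneg v
  have hqr : q ≤ r := by
    have := (add_comm A S ▸ hA.posSemidef_inv_sub_inv_add hS).re_dotProduct_nonneg v
    rwa [sub_mulVec, dotProduct_sub, map_sub, sub_nonneg] at this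
  have hq_pos : 0 < 1 + t * q := by positivity
  have hr_pos : 0 < 1 + t * r := by nlinarith
  unfold logDetGain
  rw [← add_assoc, hSA.re_det_add_smul_vecMulVec, hA.re_det_add_smul_vecMulVec,
    Real.log_mul hSA.re_det_pos.ne' hq_pos.ne', Real.log_mul hA.re_det_pos.ne' hr_pos.ne']
  have : Real.log (1 + t * q) ≤ Real.log (1 + t * r) := by gcongr
  linarith

lemma logDetGain_diagonal_antitone {S : Matrix n n 𝕜} (hS : S.PosSemidef) {d e : n → ℝ}
    (hd : ∀ i, 0 < d i) (hde : d ≤ e) :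
    logDetGain S (diagonal fun i => (e i : 𝕜)) ≤ logDetGain S (diagonal fun i => (d i : 𝕜)) := by
  suffices ∀ s : Finset n,
      logDetGain S (diagonal fun i => (s.piecewise e d i : 𝕜)) ≤
        logDetGain S (diagonal fun i => (d i : 𝕜)) by
    simpa using this Finset.univ
  intro s
  induction s using Finset.induction_on with
  | empty => simp
  | insert l s hl ih =>
    have hpos : ∀ i, 0 < s.piecewise e d i := fun i =>
      (hd i).trans_le (by by_cases hi : i ∈ s <;> simp [hi, hde i])
    rw [Finset.piecewise_insert, diagonal_update_eq_add_smul_vecMulVec]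
    refine (logDetGain_add_smul_vecMulVec_le hS (PosDef.diagonal ?_) ?_ _).trans ih
    · exact fun i => by exact_mod_cast hpos i
    · rw [sub_nonneg, s.piecewise_eq_of_notMem _ _ hl]; exact hde l

end Matrix

/-- Adding quantization noise reduces the achievable SIC sum-rate:
if `0 ≤ Ψ₁ ≤ Ψ₂` (diagonal, entrywise), then
`log det(S + Ψ₂ + σ²I) − log det(Ψ₂ + σ²I) ≤ log det(S + Ψ₁ + σ²I) − log det(Ψ₁ + σ²I)`. -/
theorem stmt12 (L : ℕ) (S : Matrix (Fin L) (Fin L) ℂ) (hS : S.PosSemidef)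
    (σ2 : ℝ) (hσ : 0 < σ2) (ψ1 ψ2 : Fin L → ℝ)
    (h1 : ∀ l, 0 ≤ ψ1 l) (h12 : ∀ l, ψ1 l ≤ ψ2 l) :
    Real.log (S + diagonal (fun i => ((ψ2 i : ℝ) : ℂ)) +
        (σ2 : ℂ) • (1 : Matrix (Fin L) (Fin L) ℂ)).det.re -
      Real.log (diagonal (fun i => ((ψ2 i : ℝ) : ℂ)) +
        (σ2 : ℂ) • (1 : Matrix (Fin L) (Fin L) ℂ)).det.re ≤
    Real.log (S + diagonal (fun i => ((ψ1 i : ℝ) : ℂ)) +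
        (σ2 : ℂ) • (1 : Matrix (Fin L) (Fin L) ℂ)).det.re -
      Real.log (diagonal (fun i => ((ψ1 i : ℝ) : ℂ)) +
        (σ2 : ℂ) • (1 : Matrix (Fin L) (Fin L) ℂ)).det.re := by
  have hshift : ∀ ψ : Fin L → ℝ, diagonal (fun i => ((ψ i : ℝ) : ℂ)) + (σ2 : ℂ) • 1 =
      diagonal fun i => ((ψ i + σ2 : ℝ) : ℂ) := by
    intro ψ
    ext i j
    by_cases hij : i = j <;> simp [hij]
  simp only [add_assoc, hshift]
  exact logDetGain_diagonal_antitone (d := fun i => ψ1 i + σ2) (e := fun i => ψ2 i + σ2) hS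
    (fun i => by linarith [h1 i]) fun i => by simp only [h12 i, add_le_add_iff_right]
end

section
/- Convexity of the fronthaul constraint set: for fixed Hermitian PSD S, σ² > 0, η ∈ (0,1), C₀ > 0, the set of diagonal positive definite L×L matrices Ψ satisfying log det(S + Ψ + σ²I) − log det(Ψ) ≤ ((1−η)/η)·C₀·log 2 is convex. -/
/-!
Expanding `det (M + diagonal ψ)` multilinearly in the rows gives
`det (M + diagonal ψ) / ∏ ψᵢ = ∑ₛ det M[s] · ∏_{i ∈ s} ψᵢ⁻¹`, a sum over the principal minors
of `M = S + σ²I`, which are nonnegative since `M` is positive semidefinite. Each monomial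
`∏ ψᵢ⁻¹` is log-convex by weighted AM–GM, and Hölder's inequality makes a nonnegative sum of
log-convex functions log-convex. So the constraint function is convex on the positive orthant,
and its sublevel sets are convex.
-/

open Matrix ComplexOrder Finset Real

theorem Real.inv_add_le_inv_rpow_mul_inv_rpow {x y a b : ℝ} (hx : 0 < x) (hy : 0 < y)
    (ha : 0 ≤ a) (hb : 0 ≤ b) (hab : a + b = 1) :
    (a * x + b * y)⁻¹ ≤ x⁻¹ ^ a * y⁻¹ ^ b := by
  rw [inv_rpow hx.le, inv_rpow hy.le, ← mul_inv]
  exact inv_anti₀ (by positivity) (geom_mean_le_arith_mean2_weighted ha hb hx.le hy.le hab)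

theorem Real.sum_rpow_mul_rpow_le {ι : Type*} (s : Finset ι) {x y : ι → ℝ}
    (hx : ∀ i ∈ s, 0 ≤ x i) (hy : ∀ i ∈ s, 0 ≤ y i) {a b : ℝ} (ha : 0 < a) (hb : 0 < b)
    (hab : a + b = 1) :
    ∑ i ∈ s, x i ^ a * y i ^ b ≤ (∑ i ∈ s, x i) ^ a * (∑ i ∈ s, y i) ^ b := by
  have := inner_le_Lp_mul_Lq_of_nonneg s (HolderConjugate.inv_inv ha hb hab)
    (fun i hi => rpow_nonneg (hx i hi) a) (fun i hi => rpow_nonneg (hy i hi) b)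
  simp only [one_div, inv_inv] at this
  convert this using 3 <;> refine sum_congr rfl fun i hi => ?_
  · exact (rpow_rpow_inv (hx i hi) ha.ne').symm
  · exact (rpow_rpow_inv (hy i hi) hb.ne').symm

theorem convexOn_log_of_le_rpow_mul_rpow {E : Type*} [AddCommGroup E] [Module ℝ E]
    {s : Set E} (hs : Convex ℝ s) {T : E → ℝ} (hT : ∀ x ∈ s, 0 < T x)
    (hTab : ∀ x ∈ s, ∀ y ∈ s, ∀ a b : ℝ, 0 < a → 0 < b → a + b = 1 →
      T (a • x + b • y) ≤ T x ^ a * T y ^ b) :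
    ConvexOn ℝ s (fun x => log (T x)) := by
  refine convexOn_iff_forall_pos.mpr ⟨hs, fun x hx y hy a b ha hb hab => ?_⟩
  calc log (T (a • x + b • y)) ≤ log (T x ^ a * T y ^ b) :=
        log_le_log (hT _ (hs hx hy ha.le hb.le hab)) (hTab x hx y hy a b ha hb hab)
    _ = a • log (T x) + b • log (T y) := by
        rw [log_mul (by have := hT x hx; positivity) (by have := hT y hy; positivity),
          log_rpow (hT x hx), log_rpow (hT y hy), smul_eq_mul, smul_eq_mul]

section Posynomial

variable {ι κ : Type*}

theorem convex_setOf_forall_pos : Convex ℝ {ψ : ι → ℝ | ∀ i, 0 < ψ i} :=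
  fun _ hψ _ hφ _ _ ha hb hab i => convex_Ioi (0 : ℝ) (hψ i) (hφ i) ha hb hab

theorem prod_inv_smul_add_smul_le (s : Finset ι) {ψ φ : ι → ℝ} (hψ : ∀ i, 0 < ψ i)
    (hφ : ∀ i, 0 < φ i) {a b : ℝ} (ha : 0 ≤ a) (hb : 0 ≤ b) (hab : a + b = 1) :
    ∏ i ∈ s, ((a • ψ + b • φ) i)⁻¹ ≤ (∏ i ∈ s, (ψ i)⁻¹) ^ a * (∏ i ∈ s, (φ i)⁻¹) ^ b := by
  rw [← finsetProd_rpow _ _ (fun i _ => (inv_pos.2 (hψ i)).le),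
    ← finsetProd_rpow _ _ (fun i _ => (inv_pos.2 (hφ i)).le), ← prod_mul_distrib]
  refine prod_le_prod (fun i _ => ?_) fun i _ =>
    inv_add_le_inv_rpow_mul_inv_rpow (hψ i) (hφ i) ha hb hab
  exact (inv_pos.2 (convex_setOf_forall_pos hψ hφ ha hb hab i)).le

theorem sum_mul_prod_inv_smul_add_smul_le [Fintype κ] (r : κ → ℝ) (hr : ∀ k, 0 ≤ r k)
    (s : κ → Finset ι) {ψ φ : ι → ℝ} (hψ : ∀ i, 0 < ψ i) (hφ : ∀ i, 0 < φ i) {a b : ℝ}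
    (ha : 0 < a) (hb : 0 < b) (hab : a + b = 1) :
    ∑ k, r k * ∏ i ∈ s k, ((a • ψ + b • φ) i)⁻¹ ≤
      (∑ k, r k * ∏ i ∈ s k, (ψ i)⁻¹) ^ a * (∑ k, r k * ∏ i ∈ s k, (φ i)⁻¹) ^ b := by
  have hψk : ∀ k ∈ univ, 0 ≤ r k * ∏ i ∈ s k, (ψ i)⁻¹ := fun k _ =>
    mul_nonneg (hr k) (prod_nonneg fun i _ => (inv_pos.2 (hψ i)).le)
  have hφk : ∀ k ∈ univ, 0 ≤ r k * ∏ i ∈ s k, (φ i)⁻¹ := fun k _ =>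
    mul_nonneg (hr k) (prod_nonneg fun i _ => (inv_pos.2 (hφ i)).le)
  refine le_trans (sum_le_sum fun k _ => ?_) (sum_rpow_mul_rpow_le univ hψk hφk ha hb hab)
  calc r k * ∏ i ∈ s k, ((a • ψ + b • φ) i)⁻¹
      ≤ r k * ((∏ i ∈ s k, (ψ i)⁻¹) ^ a * (∏ i ∈ s k, (φ i)⁻¹) ^ b) :=
        mul_le_mul_of_nonneg_left (prod_inv_smul_add_smul_le _ hψ hφ ha.le hb.le hab) (hr k)
    _ = r k ^ (a + b) * ((∏ i ∈ s k, (ψ i)⁻¹) ^ a * (∏ i ∈ s k, (φ i)⁻¹) ^ b) := by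
        rw [hab, rpow_one]
    _ = (r k * ∏ i ∈ s k, (ψ i)⁻¹) ^ a * (r k * ∏ i ∈ s k, (φ i)⁻¹) ^ b := by
        rw [mul_rpow (hr k) (prod_nonneg fun i _ => (inv_pos.2 (hψ i)).le),
          mul_rpow (hr k) (prod_nonneg fun i _ => (inv_pos.2 (hφ i)).le),
          rpow_add' (hr k) (by rw [hab]; exact one_ne_zero)]
        ring

theorem convexOn_log_sum_mul_prod_inv [Fintype κ] (r : κ → ℝ) (hr : ∀ k, 0 ≤ r k)
    (s : κ → Finset ι) (hpos : ∀ ψ : ι → ℝ, (∀ i, 0 < ψ i) → 0 < ∑ k, r k * ∏ i ∈ s k, (ψ i)⁻¹) :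
    ConvexOn ℝ {ψ : ι → ℝ | ∀ i, 0 < ψ i}
      (fun ψ => log (∑ k, r k * ∏ i ∈ s k, (ψ i)⁻¹)) :=
  convexOn_log_of_le_rpow_mul_rpow convex_setOf_forall_pos hpos
    fun _ hψ _ hφ _ _ ha hb hab => sum_mul_prod_inv_smul_add_smul_le r hr s hψ hφ ha hb hab

end Posynomial

namespace Matrix

variable {n R : Type*} [Fintype n] [DecidableEq n] [CommRing R]

theorem det_add_diagonal_eq_sum (M : Matrix n n R) (d : n → R) :
    (M + diagonal d).det =
      ∑ s : Finset n, (∏ i ∈ sᶜ, d i) * (M.submatrix (↑) (↑) : Matrix s s R).det := by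
  change (detRowAlternating : (n → R) [⋀^n]→ₗ[R] R).toMultilinearMap
    (M.row + (diagonal d).row) = _
  rw [MultilinearMap.map_add_univ]
  refine sum_congr rfl fun s _ => ?_
  have hrows : s.piecewise M.row (diagonal d).row =
      sᶜ.piecewise (fun i => d i • s.piecewise M.row (1 : Matrix n n R).row i)
        (s.piecewise M.row (1 : Matrix n n R).row) := by
    ext i j
    by_cases hi : i ∈ s
    · simp [Finset.piecewise, hi]
    · simp [Finset.piecewise, hi, diagonal_apply, one_apply]
  rw [hrows, MultilinearMap.map_piecewise_smul, smul_eq_mul]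
  exact congrArg _ (det_piecewise_one_eq_submatrix_det M s)

theorem re_det_add_diagonal_ofReal (M : Matrix n n ℂ) (ψ : n → ℝ) :
    (M + diagonal (fun i => (ψ i : ℂ))).det.re =
      ∑ s : Finset n, (∏ i ∈ sᶜ, ψ i) * (M.submatrix (↑) (↑) : Matrix s s ℂ).det.re := by
  simp only [det_add_diagonal_eq_sum, Complex.re_sum, ← Complex.ofReal_prod,
    Complex.re_ofReal_mul]

theorem re_det_add_diagonal_ofReal_eq_mul_prod (M : Matrix n n ℂ) {ψ : n → ℝ}
    (hψ : ∀ i, 0 < ψ i) :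
    (M + diagonal (fun i => (ψ i : ℂ))).det.re =
      (∑ s : Finset n, (M.submatrix (↑) (↑) : Matrix s s ℂ).det.re * ∏ i ∈ s, (ψ i)⁻¹) *
        ∏ i, ψ i := by
  rw [re_det_add_diagonal_ofReal, sum_mul]
  refine sum_congr rfl fun s _ => ?_
  have hs : ∏ i ∈ s, ψ i ≠ 0 := (prod_pos fun i _ => hψ i).ne'
  rw [← prod_mul_prod_compl s, prod_inv_distrib]
  field_simp

theorem re_det_diagonal_ofReal (ψ : n → ℝ) :
    (diagonal (fun i => (ψ i : ℂ))).det.re = ∏ i, ψ i := by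
  rw [det_diagonal, ← Complex.ofReal_prod, Complex.ofReal_re]

theorem PosSemidef.convexOn_log_det_add_diagonal_sub_log_det_diagonal {M : Matrix n n ℂ}
    (hM : M.PosSemidef) :
    ConvexOn ℝ {ψ : n → ℝ | ∀ i, 0 < ψ i} fun ψ =>
      Real.log (M + diagonal (fun i => (ψ i : ℂ))).det.re -
        Real.log (diagonal (fun i => (ψ i : ℂ))).det.re := by
  set r : Finset n → ℝ := fun s => (M.submatrix (↑) (↑) : Matrix s s ℂ).det.re
  have hr : ∀ s, 0 ≤ r s := fun s => (Complex.nonneg_iff.mp (hM.submatrix _).det_nonneg).1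
  -- The empty minor contributes `1`.
  have hpos : ∀ ψ : n → ℝ, (∀ i, 0 < ψ i) → 0 < ∑ s, r s * ∏ i ∈ s, (ψ i)⁻¹ := fun ψ hψ =>
    zero_lt_one.trans_le <| by
      simpa [r] using single_le_sum (f := fun s => r s * ∏ i ∈ s, (ψ i)⁻¹)
        (fun s _ => mul_nonneg (hr s) (prod_nonneg fun i _ => (inv_pos.2 (hψ i)).le))
        (mem_univ ∅)
  refine (convexOn_log_sum_mul_prod_inv r hr id hpos).congr fun ψ hψ => ?_
  have hprod : 0 < ∏ i, ψ i := prod_pos fun i _ => hψ i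
  rw [re_det_add_diagonal_ofReal_eq_mul_prod M hψ, re_det_diagonal_ofReal,
    log_mul (hpos ψ hψ).ne' hprod.ne', add_sub_cancel_right]
  rfl

end Matrix

theorem stmt17_general (L : ℕ) (S : Matrix (Fin L) (Fin L) ℂ) (hS : S.PosSemidef)
    (σ2 : ℝ) (hσ : 0 < σ2) (η : ℝ) (C0 : ℝ) :
    Convex ℝ {ψ : Fin L → ℝ | (∀ l, 0 < ψ l) ∧
      Real.log (S + diagonal (fun i => ((ψ i : ℝ) : ℂ)) +
          (σ2 : ℂ) • (1 : Matrix (Fin L) (Fin L) ℂ)).det.re -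
        Real.log (diagonal (fun i => ((ψ i : ℝ) : ℂ))).det.re ≤
          ((1 - η) / η) * C0 * Real.log 2} := by
  have hM : (S + (σ2 : ℂ) • (1 : Matrix (Fin L) (Fin L) ℂ)).PosSemidef :=
    hS.add (PosSemidef.one.smul (by exact_mod_cast hσ.le))
  simpa only [add_right_comm S, Set.mem_ofPred_eq] using
    hM.convexOn_log_det_add_diagonal_sub_log_det_diagonal.convex_le (((1 - η) / η) * C0 * log 2)

/-- Convexity of the fronthaul constraint set: the set of entrywise-positive
diagonal `Ψ` with `log det(S + Ψ + σ²I) − log det Ψ ≤ ((1−η)/η)·C₀·log 2`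
is convex. -/
theorem stmt17 (L : ℕ) (S : Matrix (Fin L) (Fin L) ℂ) (hS : S.PosSemidef)
    (σ2 : ℝ) (hσ : 0 < σ2) (η : ℝ) (hη0 : 0 < η) (hη1 : η < 1) (C0 : ℝ) (hC0 : 0 < C0) :
    Convex ℝ {ψ : Fin L → ℝ | (∀ l, 0 < ψ l) ∧
      Real.log (S + diagonal (fun i => ((ψ i : ℝ) : ℂ)) +
          (σ2 : ℂ) • (1 : Matrix (Fin L) (Fin L) ℂ)).det.re -
        Real.log (diagonal (fun i => ((ψ i : ℝ) : ℂ))).det.re ≤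
          ((1 - η) / η) * C0 * Real.log 2} :=
  stmt17_general L S hS σ2 hσ η C0
end
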